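/- Let s ∈ S^n be a fixed sequence with empirical type T_s, and let Z_1,...,Z_n be independent with Z_i ∼ P_{Z|S}(·|s_i) for a fixed channel P_{Z|S} on finite alphabets. Then Pr(‖T_{s,Z} − T_s·P_{Z|S}‖_∞ > 3δ₀) ≤ |S|·|Z|·e^{−2nδ₀³}, where T_{s,Z}(a,b) = (1/n)·#{i : s_i=a, Z_i=b}. -/

import Mathlib

/-!
For a fixed pair `(a, b)`, `n (T_{s,Z}(a,b) - T_s(a) W(a,b))` is the sum, over the positions `i`
with `sᵢ = a`, of the independent centred indicators `1[Zᵢ = b] - W(a,b)`. By Hoeffding's lemma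
each is `1/4`-sub-Gaussian, so Hoeffding's inequality bounds the probability of a deviation
beyond `3δ₀` by `2 e^{-18 n δ₀²}`. A union bound over the `|S| |Z|` pairs, together with the
trivial bound `1`, gives the claim: for `3δ₀ < 1` and `|Z| ≥ 2`, either
`|S| |Z| e^{-2nδ₀³} ≥ 1` or `e^{2nδ₀³} > 2` absorbs the factor `2`. For `3δ₀ ≥ 1` or
`|Z| = 1` the event is empty.
-/

open MeasureTheory ProbabilityTheory Finset Real
open scoped NNReal

namespace ProbabilityTheory.HasSubgaussianMGF

variable {Ω : Type*} {mΩ : MeasurableSpace Ω} {μ : Measure Ω} {X : Ω → ℝ} {c c' : ℝ≥0}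

lemma mono (h : HasSubgaussianMGF X c μ) (hc : c ≤ c') : HasSubgaussianMGF X c' μ where
  integrable_exp_mul := h.integrable_exp_mul
  mgf_le t := (h.mgf_le t).trans <| exp_le_exp.2 <| by gcongr

lemma measureReal_abs_ge_le [IsFiniteMeasure μ] (h : HasSubgaussianMGF X c μ) {ε : ℝ}
    (hε : 0 ≤ ε) : μ.real {ω | ε ≤ |X ω|} ≤ 2 * exp (-ε ^ 2 / (2 * c)) := by
  have hsub : {ω | ε ≤ |X ω|} ⊆ {ω | ε ≤ X ω} ∪ {ω | ε ≤ (-X) ω} :=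
    fun ω (hω : ε ≤ |X ω|) ↦ show ε ≤ X ω ∨ ε ≤ -X ω from le_abs.1 hω
  calc μ.real {ω | ε ≤ |X ω|} ≤ μ.real ({ω | ε ≤ X ω} ∪ {ω | ε ≤ (-X) ω}) :=
        measureReal_mono hsub
    _ ≤ μ.real {ω | ε ≤ X ω} + μ.real {ω | ε ≤ (-X) ω} := measureReal_union_le _ _
    _ ≤ exp (-ε ^ 2 / (2 * c)) + exp (-ε ^ 2 / (2 * c)) :=
      add_le_add (h.measure_ge_le hε) (h.neg.measure_ge_le hε)
    _ = 2 * exp (-ε ^ 2 / (2 * c)) := by ring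

end ProbabilityTheory.HasSubgaussianMGF

lemma ProbabilityTheory.hasSubgaussianMGF_indicator_sub_measureReal {Ω : Type*}
    [MeasurableSpace Ω] {μ : Measure Ω} [IsProbabilityMeasure μ] {E : Set Ω}
    (hE : MeasurableSet E) :
    HasSubgaussianMGF (fun ω ↦ E.indicator 1 ω - μ.real E) (1 / 4) μ := by
  have h := hasSubgaussianMGF_of_mem_Icc (μ := μ) (X := E.indicator 1) (a := 0) (b := 1)
    (measurable_one.indicator hE).aemeasurable
    (ae_of_all _ fun ω ↦ ⟨Set.indicator_nonneg (fun _ _ ↦ zero_le_one) ω,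
      Set.indicator_le_self' (fun _ _ ↦ zero_le_one) ω⟩)
  rw [integral_indicator_one hE] at h
  convert h using 1
  rw [sub_zero, nnnorm_one]
  norm_num

section EmpiricalType

variable {S 𝒵 : Type*} [DecidableEq S] [DecidableEq 𝒵] {n : ℕ}

noncomputable def empiricalType (s : Fin n → S) (a : S) : ℝ := #{i | s i = a} / n

noncomputable def empiricalJointType (s : Fin n → S) (z : Fin n → 𝒵) (a : S) (b : 𝒵) :
    ℝ :=
  #{i | s i = a ∧ z i = b} / n

lemma empiricalJointType_sub_empiricalType_mul (s : Fin n → S) (z : Fin n → 𝒵) (a : S)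
    (b : 𝒵) (w : ℝ) : empiricalJointType s z a b - empiricalType s a * w =
      (∑ i with s i = a, ((if z i = b then 1 else 0) - w)) / n := by
  rw [sum_sub_distrib, sum_boole, filter_filter, sum_const, nsmul_eq_mul, empiricalJointType,
    empiricalType]
  ring

lemma card_filter_div_le_one (p : Fin n → Prop) [DecidablePred p] :
    (#{i | p i} : ℝ) / n ≤ 1 :=
  div_le_one_of_le₀ (by simpa using card_filter_le univ p) n.cast_nonneg

lemma abs_empiricalJointType_sub_empiricalType_mul_le_one (s : Fin n → S) (z : Fin n → 𝒵)
    (a : S) (b : 𝒵) {w : ℝ} (hw0 : 0 ≤ w) (hw1 : w ≤ 1) :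
    |empiricalJointType s z a b - empiricalType s a * w| ≤ 1 := by
  have hJ : 0 ≤ empiricalJointType s z a b := by unfold empiricalJointType; positivity
  have hT : 0 ≤ empiricalType s a := by unfold empiricalType; positivity
  have hJ1 : empiricalJointType s z a b ≤ 1 := card_filter_div_le_one _
  have hT1 : empiricalType s a ≤ 1 := card_filter_div_le_one _
  rw [abs_sub_le_iff]
  constructor <;> nlinarith

lemma empiricalJointType_of_subsingleton [Subsingleton 𝒵] (s : Fin n → S) (z : Fin n → 𝒵)
    (a : S) (b : 𝒵) : empiricalJointType s z a b = empiricalType s a := by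
  simp [empiricalJointType, empiricalType, Subsingleton.elim _ b]

end EmpiricalType

lemma measure_lt_abs_empiricalJointType_sub_le {S 𝒵 : Type*} [DecidableEq S] [DecidableEq 𝒵]
    [MeasurableSpace 𝒵] [MeasurableSingletonClass 𝒵] {Ω : Type*} [MeasurableSpace Ω]
    {μ : Measure Ω} [IsProbabilityMeasure μ] {n : ℕ} (hn : 0 < n) (s : Fin n → S)
    {W : S → 𝒵 → ℝ} (hW0 : ∀ a b, 0 ≤ W a b) {Z : Fin n → Ω → 𝒵}
    (hmeas : ∀ i, Measurable (Z i)) (hindep : iIndepFun Z μ)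
    (hlaw : ∀ i b, μ {ω | Z i ω = b} = ENNReal.ofReal (W (s i) b))
    (a : S) (b : 𝒵) {ε : ℝ} (hε : 0 ≤ ε) :
    μ {ω | ε < |empiricalJointType s (fun i ↦ Z i ω) a b - empiricalType s a * W a b|} ≤
      ENNReal.ofReal (2 * exp (-2 * n * ε ^ 2)) := by
  set A : Finset (Fin n) := {i | s i = a}
  let X : Fin n → Ω → ℝ := fun i ω ↦ ({b} : Set 𝒵).indicator 1 (Z i ω) - W (s i) b
  have hX : ∀ i, HasSubgaussianMGF (X i) (1 / 4) μ := fun i ↦ by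
    have h := hasSubgaussianMGF_indicator_sub_measureReal (μ := μ)
      (hmeas i (measurableSet_singleton b))
    have hp : μ.real (Z i ⁻¹' {b}) = W (s i) b :=
      (congrArg ENNReal.toReal (hlaw i b)).trans (ENNReal.toReal_ofReal (hW0 _ _))
    rw [hp] at h
    exact h
  have hXindep : iIndepFun X μ := hindep.comp _ fun i ↦
    (measurable_one.indicator (measurableSet_singleton b)).sub_const _
  have hsum : HasSubgaussianMGF (fun ω ↦ ∑ i ∈ A, X i ω) (n / 4) μ := by
    refine (HasSubgaussianMGF.sum_of_iIndepFun hXindep fun i _ ↦ hX i).mono ?_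
    rw [sum_const, nsmul_eq_mul, mul_one_div]
    gcongr
    simpa using card_le_univ A
  have hdev : ∀ ω, empiricalJointType s (fun i ↦ Z i ω) a b - empiricalType s a * W a b =
      (∑ i ∈ A, X i ω) / n := fun ω ↦ by
    rw [empiricalJointType_sub_empiricalType_mul]
    refine congrArg (· / (n : ℝ)) (sum_congr rfl fun i hi ↦ ?_)
    simp [X, Set.indicator_apply, (mem_filter.1 hi).2]
  have hnR : (0 : ℝ) < n := Nat.cast_pos.2 hn
  calc μ {ω | ε < |empiricalJointType s (fun i ↦ Z i ω) a b - empiricalType s a * W a b|}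
      ≤ μ {ω | n * ε ≤ |∑ i ∈ A, X i ω|} := measure_mono fun ω hω ↦ by
        rw [Set.mem_ofPred_eq, hdev, abs_div, abs_of_pos hnR, lt_div_iff₀ hnR] at hω
        exact (mul_comm ε n ▸ hω).le
    _ = ENNReal.ofReal (μ.real {ω | n * ε ≤ |∑ i ∈ A, X i ω|}) :=
        (ofReal_measureReal).symm
    _ ≤ ENNReal.ofReal (2 * exp (-(n * ε) ^ 2 / (2 * (n / 4 : ℝ≥0)))) :=
        ENNReal.ofReal_le_ofReal (hsum.measureReal_abs_ge_le (by positivity))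
    _ = ENNReal.ofReal (2 * exp (-2 * n * ε ^ 2)) := by
        congr 3
        push_cast
        field_simp
        ring

lemma measure_setOf_exists₂_le {Ω α β : Type*} [MeasurableSpace Ω] {μ : Measure Ω}
    [Fintype α] [Fintype β] {P : α → β → Ω → Prop} {r : ℝ}
    (h : ∀ a b, μ {ω | P a b ω} ≤ ENNReal.ofReal r) :
    μ {ω | ∃ a b, P a b ω} ≤ ENNReal.ofReal (Fintype.card α * Fintype.card β * r) := by
  calc μ {ω | ∃ a b, P a b ω} = μ (⋃ a, ⋃ b, {ω | P a b ω}) := by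
        simp only [Set.ofPred_exists]
    _ ≤ ∑ a, ∑ b, μ {ω | P a b ω} := (measure_iUnion_fintype_le _ _).trans
        (sum_le_sum fun a _ ↦ measure_iUnion_fintype_le _ _)
    _ ≤ ∑ _a : α, ∑ _b : β, ENNReal.ofReal r := by gcongr with a _ b _; exact h a b
    _ = ENNReal.ofReal (Fintype.card α * Fintype.card β * r) := by
        rw [ENNReal.ofReal_mul (by positivity), ENNReal.ofReal_mul (by positivity)]
        simp [sum_const, nsmul_eq_mul, mul_assoc]

lemma min_one_mul_two_mul_exp_le_mul_exp {c n δ : ℝ} (hc : 2 ≤ c) (hn : 0 ≤ n)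
    (hδ : 3 * δ ≤ 1) :
    min 1 (c * (2 * exp (-2 * n * (3 * δ) ^ 2))) ≤ c * exp (-2 * n * δ ^ 3) := by
  have hcube : n * δ ^ 3 ≤ n * δ ^ 2 / 3 := by
    have := mul_le_mul_of_nonneg_left hδ (mul_nonneg hn (sq_nonneg δ))
    nlinarith
  rcases le_or_gt (1 / 2) (exp (-2 * n * δ ^ 3)) with h | h
  · exact (min_le_left _ _).trans (by nlinarith)
  · refine (min_le_right _ _).trans (mul_le_mul_of_nonneg_left ?_ (by linarith))
    have hinv : exp (2 * n * δ ^ 3) * exp (-2 * n * δ ^ 3) = 1 := by rw [← exp_add]; simp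
    have h2 : 2 ≤ exp (2 * n * δ ^ 3) := by nlinarith [exp_pos (2 * n * δ ^ 3)]
    calc 2 * exp (-2 * n * (3 * δ) ^ 2)
        ≤ exp (2 * n * δ ^ 3) * exp (-2 * n * (3 * δ) ^ 2) := by gcongr
      _ = exp (2 * n * δ ^ 3 + -2 * n * (3 * δ) ^ 2) := (exp_add _ _).symm
      _ ≤ exp (-2 * n * δ ^ 3) := exp_le_exp.2 (by nlinarith)

/-- Let `s ∈ S^n` be a fixed sequence with empirical type `T_s`, and let `Z₁,…,Zₙ` be
independent with `Zᵢ ∼ P_{Z|S}(·|sᵢ)`. Then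
`Pr(‖T_{s,Z} − T_s·P_{Z|S}‖_∞ > 3δ₀) ≤ |S|·|Z|·e^{−2nδ₀³}`. -/
theorem stmt6 {S 𝒵 : Type*} [Fintype S] [DecidableEq S] [Fintype 𝒵] [DecidableEq 𝒵]
    [MeasurableSpace 𝒵] [MeasurableSingletonClass 𝒵]
    {Ω : Type*} [MeasurableSpace Ω] (μ : Measure Ω) [IsProbabilityMeasure μ]
    (n : ℕ) (hn : 0 < n) (s : Fin n → S)
    (W : S → 𝒵 → ℝ) (hW0 : ∀ a b, 0 ≤ W a b) (hW1 : ∀ a, ∑ b, W a b = 1)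
    (Z : Fin n → Ω → 𝒵) (hmeas : ∀ i, Measurable (Z i))
    (hindep : iIndepFun Z μ)
    (hlaw : ∀ i b, μ {ω | Z i ω = b} = ENNReal.ofReal (W (s i) b))
    (δ0 : ℝ) (hδ0 : 0 < δ0) :
    μ {ω | ∃ (a : S) (b : 𝒵), 3 * δ0 <
        |((Finset.univ.filter (fun i : Fin n => s i = a ∧ Z i ω = b)).card : ℝ) / n
          - (((Finset.univ.filter (fun i : Fin n => s i = a)).card : ℝ) / n) * W a b|} ≤
      ENNReal.ofReal ((Fintype.card S : ℝ) * (Fintype.card 𝒵) *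
        Real.exp (-2 * n * δ0 ^ 3)) := by
  change μ {ω | ∃ a b, 3 * δ0 <
    |empiricalJointType s (fun i ↦ Z i ω) a b - empiricalType s a * W a b|} ≤ _
  rcases le_or_gt 1 (3 * δ0) with hδ | hδ
  · refine (measure_mono_null (fun ω hω ↦ ?_) measure_empty).trans_le zero_le
    obtain ⟨a, b, h⟩ := hω
    have hW_le : W a b ≤ 1 := hW1 a ▸ single_le_sum (fun c _ ↦ hW0 a c) (mem_univ b)
    linarith [abs_empiricalJointType_sub_empiricalType_mul_le_one s (fun i ↦ Z i ω) a b
      (hW0 a b) hW_le]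
  rcases le_or_gt (Fintype.card 𝒵) 1 with h𝒵 | h𝒵
  · have := Fintype.card_le_one_iff_subsingleton.1 h𝒵
    refine (measure_mono_null (fun ω hω ↦ ?_) measure_empty).trans_le zero_le
    obtain ⟨a, b, h⟩ := hω
    have hW : W a b = 1 := by simpa [Fintype.sum_subsingleton _ b] using hW1 a
    rw [empiricalJointType_of_subsingleton, hW, mul_one, sub_self, abs_zero] at h
    linarith
  have hc : (2 : ℝ) ≤ Fintype.card S * Fintype.card 𝒵 := by
    have hS : 1 ≤ Fintype.card S := Fintype.card_pos_iff.2 ⟨s ⟨0, hn⟩⟩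
    exact_mod_cast Nat.mul_le_mul hS h𝒵
  calc _ ≤ ENNReal.ofReal (min 1
        (Fintype.card S * Fintype.card 𝒵 * (2 * exp (-2 * n * (3 * δ0) ^ 2)))) := by
        rw [ENNReal.ofReal_min, ENNReal.ofReal_one]
        exact le_min prob_le_one <| measure_setOf_exists₂_le fun a b ↦
          measure_lt_abs_empiricalJointType_sub_le hn s hW0 hmeas hindep hlaw a b (by positivity)
    _ ≤ _ := ENNReal.ofReal_le_ofReal <|
        min_one_mul_two_mul_exp_le_mul_exp hc n.cast_nonneg hδ.le
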